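/- arXiv:math/9811126 — 2 statements merged into one kernel-verified Lean document; each statement's English description precedes it below -/
import Mathlib

section
/- For any multi-index P = (p_1, ..., p_n) of nonnegative integers, any nonnegative integer q, and any real m > 0, one has ∫_{C^n} |z^P|^2 |z|^{2q} e^{-m|z|^2} dV_0 = (n+p+q-1)! · P! / ((p+n-1)! · m^{n+p+q}), where p = p_1 + ⋯ + p_n and P! = p_1! ⋯ p_n!. -/
/-!
Writing `|z|^{2(q+1)} = |z|^{2q} ∑ⱼ |zⱼ|²` turns the integral for `(P, q + 1)` into the sum over `j`
of the integrals for `(P + eⱼ, q)`, and the closed form obeys the same recursion because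
`∑ⱼ (Pⱼ + 1) = p + n`. For `q = 0` the integrand is a product over the coordinates, so the integral
factors into the one-dimensional integrals `∫_ℂ |x|^{2k} e^{-m|x|²} = π k! / m^{k+1}`, computed in
polar coordinates. Induction on `q`, for all `P` at once, gives the formula.
-/

open MeasureTheory Real Finset
open scoped Nat

theorem Complex.integral_norm_pow_mul_exp_neg_mul_sq {m : ℝ} (hm : 0 < m) (k : ℕ) :
    ∫ x : ℂ, ‖x‖ ^ (2 * k) * rexp (-m * ‖x‖ ^ 2) = π * k ! / m ^ (k + 1) := by
  have h := Complex.integral_rpow_mul_exp_neg_mul_rpow (p := 2) (q := (2 * k : ℕ))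
    one_le_two (by linarith [(2 * k : ℕ).cast_nonneg (α := ℝ)]) hm
  have hk : ((2 * k : ℕ) + 2 : ℝ) / 2 = (k + 1 : ℕ) := by push_cast; ring
  simp only [Real.rpow_natCast, Real.rpow_two, neg_div, hk, Real.rpow_neg hm.le] at h
  rw [Nat.cast_succ, Real.Gamma_nat_eq_factorial] at h
  rw [h]
  field_simp

theorem Complex.integrable_norm_pow_mul_exp_neg_mul_sq {m : ℝ} (hm : 0 < m) (k : ℕ) :
    Integrable fun x : ℂ => ‖x‖ ^ (2 * k) * rexp (-m * ‖x‖ ^ 2) :=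
  .of_integral_ne_zero <| by
    rw [Complex.integral_norm_pow_mul_exp_neg_mul_sq hm]; positivity

section

variable {ι : Type*} [Fintype ι]

@[to_additive]
theorem Finset.prod_apply_update_of_eq_mul {α M : Type*} [CommMonoid M] [DecidableEq ι]
    (g : ι → α → M) (P : ι → α) (j : ι) {v : α} {c : M} (hc : g j v = c * g j (P j)) :
    ∏ i, g i (Function.update P j v i) = c * ∏ i, g i (P i) := by
  simp only [Function.apply_update (fun i => g i)]
  rw [prod_update_of_mem (mem_univ j), prod_eq_mul_prod_sdiff_singleton_of_mem (mem_univ j), hc,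
    mul_assoc]

noncomputable def weightedGaussian (m : ℝ) (P : ι → ℕ) (q : ℕ) (z : ι → ℂ) : ℝ :=
  (∏ i, ‖z i‖ ^ (2 * P i)) * (∑ i, ‖z i‖ ^ 2) ^ q * rexp (-m * ∑ i, ‖z i‖ ^ 2)

theorem weightedGaussian_zero (m : ℝ) (P : ι → ℕ) (z : ι → ℂ) :
    weightedGaussian m P 0 z = ∏ i, ‖z i‖ ^ (2 * P i) * rexp (-m * ‖z i‖ ^ 2) := by
  rw [weightedGaussian, pow_zero, mul_one, prod_mul_distrib, mul_sum, Real.exp_sum]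

theorem weightedGaussian_succ [DecidableEq ι] (m : ℝ) (P : ι → ℕ) (q : ℕ) (z : ι → ℂ) :
    weightedGaussian m P (q + 1) z =
      ∑ j, weightedGaussian m (Function.update P j (P j + 1)) q z := by
  have raise (j : ι) : ∏ i, ‖z i‖ ^ (2 * Function.update P j (P j + 1) i) =
      ‖z j‖ ^ 2 * ∏ i, ‖z i‖ ^ (2 * P i) :=
    prod_apply_update_of_eq_mul (fun i k => ‖z i‖ ^ (2 * k)) P j (by ring)
  simp only [weightedGaussian, raise, ← sum_mul, pow_succ]
  ring

theorem integrable_weightedGaussian [DecidableEq ι] {m : ℝ} (hm : 0 < m) (P : ι → ℕ) (q : ℕ) :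
    Integrable (weightedGaussian m P q) := by
  induction q generalizing P with
  | zero =>
    simp only [funext (weightedGaussian_zero m P)]
    exact .fintype_prod fun i => Complex.integrable_norm_pow_mul_exp_neg_mul_sq hm (P i)
  | succ q ih =>
    simp only [funext (weightedGaussian_succ m P q)]
    exact integrable_finsetSum _ fun j _ => ih _

theorem integral_weightedGaussian_zero {m : ℝ} (hm : 0 < m) (P : ι → ℕ) :
    ∫ z, weightedGaussian m P 0 z = ∏ i, π * (P i)! / m ^ (P i + 1) := by
  simp only [weightedGaussian_zero]
  rw [integral_fintype_prod_volume_eq_prod fun i x => ‖x‖ ^ (2 * P i) * rexp (-m * ‖x‖ ^ 2)]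
  simp only [Complex.integral_norm_pow_mul_exp_neg_mul_sq hm]

theorem integral_weightedGaussian_succ [DecidableEq ι] {m : ℝ} (hm : 0 < m) (P : ι → ℕ)
    (q : ℕ) :
    ∫ z, weightedGaussian m P (q + 1) z =
      ∑ j, ∫ z, weightedGaussian m (Function.update P j (P j + 1)) q z := by
  simp only [weightedGaussian_succ]
  exact integral_finsetSum _ fun j _ => integrable_weightedGaussian hm _ q

noncomputable def weightedGaussianMoment (P : ι → ℕ) (q : ℕ) (m : ℝ) : ℝ :=
  ((Fintype.card ι + ∑ i, P i + q - 1)! * ((∏ i, (P i)! : ℕ) : ℝ)) /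
    ((∑ i, P i + Fintype.card ι - 1)! * m ^ (Fintype.card ι + ∑ i, P i + q))

theorem weightedGaussianMoment_zero (P : ι → ℕ) (m : ℝ) :
    weightedGaussianMoment P 0 m = ∏ i, ((P i)! / m ^ (P i + 1) : ℝ) := by
  have hsum : ∑ i, (P i + 1) = Fintype.card ι + ∑ i, P i := by
    rw [sum_add_distrib, sum_const, card_univ, smul_eq_mul, mul_one, add_comm]
  rw [weightedGaussianMoment, prod_div_distrib, prod_pow_eq_pow_sum, hsum, Nat.cast_prod,
    add_zero, add_comm (Fintype.card ι), mul_div_mul_left _ _ (by positivity)]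

theorem weightedGaussianMoment_update [DecidableEq ι] (P : ι → ℕ) (q : ℕ) (m : ℝ) (j : ι) :
    weightedGaussianMoment (Function.update P j (P j + 1)) q m =
      (P j + 1) * ((Fintype.card ι + ∑ i, P i + q)! * ((∏ i, (P i)! : ℕ) : ℝ) /
        ((∑ i, P i + Fintype.card ι)! * m ^ (Fintype.card ι + ∑ i, P i + q + 1))) := by
  have hsum : ∑ i, Function.update P j (P j + 1) i = ∑ i, P i + 1 :=
    (sum_apply_update_of_eq_add (fun _ k => k) P j (add_comm _ _)).trans (add_comm _ _)
  have hprod : ∏ i, (Function.update P j (P j + 1) i)! = (P j + 1) * ∏ i, (P i)! :=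
    prod_apply_update_of_eq_mul (fun _ k => k !) P j (Nat.factorial_succ _)
  rw [weightedGaussianMoment, hsum, hprod]
  generalize Fintype.card ι = n, ∑ i, P i = p
  rw [show n + (p + 1) + q - 1 = n + p + q by omega, show p + 1 + n - 1 = p + n by omega,
    show n + (p + 1) + q = n + p + q + 1 by omega]
  push_cast
  ring

theorem weightedGaussianMoment_succ [Nonempty ι] [DecidableEq ι] (P : ι → ℕ) (q : ℕ) (m : ℝ) :
    weightedGaussianMoment P (q + 1) m =
      ∑ j, weightedGaussianMoment (Function.update P j (P j + 1)) q m := by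
  have hpn : ∑ i, P i + Fintype.card ι ≠ 0 := (Nat.add_pos_right _ Fintype.card_pos).ne'
  have hsum : ∑ j, ((P j : ℝ) + 1) = ((∑ i, P i + Fintype.card ι : ℕ) : ℝ) := by
    push_cast
    rw [sum_add_distrib, sum_const, card_univ, nsmul_one]
  rw [sum_congr rfl fun j _ => weightedGaussianMoment_update P q m j, ← sum_mul, hsum,
    weightedGaussianMoment, ← add_assoc, Nat.add_sub_cancel, ← Nat.mul_factorial_pred hpn,
    Nat.cast_mul, mul_assoc, ← mul_div_mul_left _ _ (Nat.cast_ne_zero.mpr hpn)]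
  ring

theorem pi_inv_pow_mul_integral_weightedGaussian [Nonempty ι] [DecidableEq ι] {m : ℝ} (hm : 0 < m)
    (P : ι → ℕ) (q : ℕ) :
    π⁻¹ ^ Fintype.card ι * ∫ z, weightedGaussian m P q z = weightedGaussianMoment P q m := by
  induction q generalizing P with
  | zero =>
    rw [integral_weightedGaussian_zero hm, weightedGaussianMoment_zero, ← card_univ,
      ← prod_const, ← prod_mul_distrib]
    refine prod_congr rfl fun i _ => ?_
    field_simp
  | succ q ih =>
    rw [integral_weightedGaussian_succ hm, mul_sum, weightedGaussianMoment_succ]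
    exact sum_congr rfl fun j _ => ih _

end

/-- Weighted Gaussian moment formula on ℂⁿ:
`∫ |z^P|² |z|^{2q} e^{-m|z|²} dV₀ = (n+p+q-1)!·P!/((p+n-1)!·m^{n+p+q})`. -/
theorem gaussian_monomial_weighted_integral (n : ℕ) (hn : 0 < n) (P : Fin n → ℕ)
    (q : ℕ) (m : ℝ) (hm : 0 < m) :
    (π : ℝ)⁻¹ ^ n *
      ∫ z : Fin n → ℂ,
        (∏ i, ‖z i‖ ^ (2 * P i)) * (∑ i, ‖z i‖ ^ 2) ^ q *
          Real.exp (-m * ∑ i, ‖z i‖ ^ 2)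
    = (Nat.factorial (n + (∑ i, P i) + q - 1) * ((∏ i, Nat.factorial (P i) : ℕ) : ℝ)) /
        (Nat.factorial ((∑ i, P i) + n - 1) * m ^ (n + (∑ i, P i) + q)) := by
  have : Nonempty (Fin n) := Fin.pos_iff_nonempty.mp hn
  simpa only [weightedGaussian, weightedGaussianMoment, Fintype.card_fin] using
    pi_inv_pow_mul_integral_weightedGaussian hm P q
end

section
/- Let A : {1,...,n}^p × {1,...,n}^p → C be symmetric, meaning A(σ(I), η(J)) = A(I, J) for all permutations σ, η of the p coordinates and all I, J ∈ {1,...,n}^p. Then for any integer q ≥ 0 and m > 0, Σ_{I,J} A(I,J) ∫_{C^n} z_{i_1}⋯z_{i_p} \bar z_{j_1}⋯\bar z_{j_p} |z|^{2q} e^{-m|z|^2} dV_0 = (Σ_I A(I,I)) · p!(n+p+q-1)! / ((p+n-1)! m^{n+p+q}). -/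
/-!
Expanding `|z|^{2q} = (∑ᵢ zᵢ z̄ᵢ)^q` writes the integrand as a sum, over `K ∈ {1,…,n}^q`, of
products of one-variable moments `∫ w^a w̄^b e^{-m|w|²}`. Rotation invariance kills these
unless `a = b`, and then they equal `π a!/m^{a+1}`. Hence the `(I, J)` integral vanishes unless
`J` is a rearrangement of `I`, where `A(I, J) = A(I, I)`. If `c` is the multiplicity vector of `I`,
orbit–stabilizer counts `p!/∏ cᵢ!` rearrangements, and induction on `q` gives
`∑_K ∏ᵢ (cᵢ + kᵢ)! = ∏ᵢ cᵢ! · (p + n)(p + n + 1)⋯(p + n + q - 1)`.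
-/

open MeasureTheory Real Finset

noncomputable def gaussMonomial (m : ℝ) (a b : ℕ) (w : ℂ) : ℂ :=
  w ^ a * (starRingEnd ℂ) w ^ b * (rexp (-m * ‖w‖ ^ 2) : ℂ)

lemma norm_gaussMonomial (m : ℝ) (a b : ℕ) (w : ℂ) :
    ‖gaussMonomial m a b w‖ = ‖w‖ ^ (a + b) * rexp (-m * ‖w‖ ^ 2) := by
  rw [gaussMonomial, norm_mul, norm_mul, norm_pow, norm_pow, RCLike.norm_conj, Complex.norm_real,
    Real.norm_of_nonneg (exp_pos _).le, pow_add]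

lemma integrable_gaussMonomial {m : ℝ} (hm : 0 < m) (a b : ℕ) :
    Integrable (gaussMonomial m a b) := by
  have hrad : Integrable fun w : ℂ => ‖w‖ ^ (a + b) * rexp (-m * ‖w‖ ^ 2) := by
    refine (integrable_fun_norm_addHaar volume
      (f := fun y => y ^ (a + b) * rexp (-m * y ^ 2))).2 ?_
    have := integrableOn_rpow_mul_exp_neg_mul_sq hm (s := ((a + b + 1 : ℕ) : ℝ))
      (by linarith [(Nat.cast_nonneg (a + b + 1) : (0:ℝ) ≤ _)])
    refine this.congr_fun (fun y _ => ?_) measurableSet_Ioi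
    simp only [Complex.finrank_real_complex, smul_eq_mul, Real.rpow_natCast]
    ring
  refine hrad.mono' (by unfold gaussMonomial; fun_prop) (.of_forall fun w => ?_)
  rw [norm_gaussMonomial]

lemma gaussMonomial_circle_mul (m : ℝ) (a b : ℕ) (u : Circle) (w : ℂ) :
    gaussMonomial m a b (u * w) = (u : ℂ) ^ a * (starRingEnd ℂ) u ^ b * gaussMonomial m a b w := by
  simp only [gaussMonomial, norm_mul, Circle.norm_coe, one_mul, map_mul, mul_pow]
  ring

lemma integral_gaussMonomial_of_ne (m : ℝ) {a b : ℕ} (hab : a ≠ b) :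
    ∫ w, gaussMonomial m a b w = 0 := by
  have hk : (a : ℂ) - b ≠ 0 := sub_ne_zero.2 (Nat.cast_injective.ne hab)
  set u := Circle.exp (π / ((a : ℝ) - b))
  have hu : (u : ℂ) ^ a * (starRingEnd ℂ) u ^ b = -1 := by
    rw [Circle.coe_exp, ← Complex.exp_conj, map_mul, Complex.conj_ofReal, Complex.conj_I,
      ← Complex.exp_nat_mul, ← Complex.exp_nat_mul, ← Complex.exp_add, ← Complex.exp_pi_mul_I]
    congr 1
    push_cast
    field_simp
    ring
  have hinv := ((rotation u).measurePreserving).integral_comp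
    (rotation u).toHomeomorph.measurableEmbedding (gaussMonomial m a b)
  simp only [rotation_apply, gaussMonomial_circle_mul, hu, integral_const_mul] at hinv
  linear_combination -hinv / 2

lemma gaussMonomial_self (m : ℝ) (a : ℕ) (w : ℂ) :
    gaussMonomial m a a w = ((‖w‖ ^ (2 * a) * rexp (-m * ‖w‖ ^ 2) : ℝ) : ℂ) := by
  rw [gaussMonomial, ← mul_pow, Complex.mul_conj, Complex.normSq_eq_norm_sq, pow_mul]
  push_cast
  ring

lemma integral_gaussMonomial_self {m : ℝ} (hm : 0 < m) (a : ℕ) :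
    ∫ w, gaussMonomial m a a w = π * a.factorial / m ^ (a + 1) := by
  have h := Complex.integral_rpow_mul_exp_neg_mul_rpow (p := (2 : ℕ)) (q := (2 * a : ℕ))
    (by norm_num) (by linarith [(Nat.cast_nonneg (2 * a) : (0 : ℝ) ≤ _)]) hm
  simp only [Real.rpow_natCast] at h
  rw [show (((2 * a : ℕ) : ℝ) + 2) / (2 : ℕ) = a + 1 by push_cast; ring,
    show -(((2 * a : ℕ) : ℝ) + 2) / (2 : ℕ) = -((a + 1 : ℕ) : ℝ) by push_cast; ring,
    Real.Gamma_nat_eq_factorial, Real.rpow_neg hm.le, Real.rpow_natCast] at h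
  simp_rw [gaussMonomial_self, integral_complex_ofReal, h]
  push_cast
  field_simp

section fiberCard

variable {α ι : Type*} [Fintype α] [DecidableEq ι]

def fiberCard (f : α → ι) (i : ι) : ℕ := #{a | f a = i}

lemma prod_comp_eq_prod_pow_fiberCard [Fintype ι] {M : Type*} [CommMonoid M] (g : ι → M)
    (f : α → ι) : ∏ a, g (f a) = ∏ i, g i ^ fiberCard f i := by
  rw [← prod_fiberwise' univ f g]
  exact prod_congr rfl fun i _ => prod_const (g i)

lemma sum_fiberCard [Fintype ι] (f : α → ι) : ∑ i, fiberCard f i = Fintype.card α :=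
  (card_eq_sum_card_fiberwise fun a _ => mem_univ (f a)).symm

lemma fiberCard_cons {q : ℕ} (x : ι) (K : Fin q → ι) :
    fiberCard (Fin.cons x K : Fin (q + 1) → ι) = fiberCard K + Pi.single x 1 := by
  ext i
  simp only [fiberCard, card_filter, Fin.sum_univ_succ, Fin.cons_zero, Fin.cons_succ,
    Pi.add_apply, Pi.single_apply, eq_comm (a := x)]
  ring

lemma fiberCard_comp_perm (f : α → ι) (σ : Equiv.Perm α) : fiberCard (f ∘ σ) = fiberCard f := by
  ext i
  simp only [fiberCard, card_filter, Function.comp_apply]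
  exact Equiv.sum_comp σ fun a => if f a = i then 1 else 0

lemma exists_perm_comp_eq_of_fiberCard_eq {f g : α → ι} (h : fiberCard g = fiberCard f) :
    ∃ σ : Equiv.Perm α, f ∘ σ = g := by
  have hcard (i : ι) : Fintype.card {a // g a = i} = Fintype.card {a // f a = i} := by
    simpa only [Fintype.card_subtype, fiberCard] using congrFun h i
  let e (i : ι) : {a // g a = i} ≃ {a // f a = i} := Fintype.equivOfCardEq (hcard i)
  refine ⟨((Equiv.sigmaFiberEquiv g).symm.trans (Equiv.sigmaCongrRight e)).trans
    (Equiv.sigmaFiberEquiv f), funext fun a => (e (g a) ⟨a, rfl⟩).2⟩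

lemma fiberCard_eq_iff_exists_perm {f g : α → ι} :
    fiberCard g = fiberCard f ↔ ∃ σ : Equiv.Perm α, f ∘ σ = g :=
  ⟨exists_perm_comp_eq_of_fiberCard_eq, fun ⟨σ, hσ⟩ => hσ ▸ fiberCard_comp_perm f σ⟩

lemma card_fiberCard_eq_mul_prod_factorial [Fintype ι] [DecidableEq α] (f : α → ι) :
    #({g | fiberCard g = fiberCard f} : Finset (α → ι)) * ∏ i, (fiberCard f i).factorial
      = (Fintype.card α).factorial := by
  have horbit : MulAction.orbit (Equiv.Perm α)ᵈᵐᵃ f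
      = ↑({g | fiberCard g = fiberCard f} : Finset (α → ι)) := by
    ext g
    simp only [MulAction.mem_orbit_iff, coe_filter, mem_univ, true_and, Set.mem_ofPred_eq,
      fiberCard_eq_iff_exists_perm, DomMulAct.mk.surjective.exists]
    rfl
  have hstab : Nat.card (MulAction.stabilizer (Equiv.Perm α)ᵈᵐᵃ f)
      = ∏ i, (fiberCard f i).factorial := by
    rw [Nat.card_congr (Equiv.subtypeEquiv (q := fun σ : Equiv.Perm α => f ∘ σ = f)
        DomMulAct.mk.symm fun _ => DomMulAct.mem_stabilizer_iff),
      Nat.card_eq_fintype_card, DomMulAct.stabilizer_card]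
    simp only [fiberCard, Fintype.card_subtype]
  have := Nat.card_congr (MulAction.orbitProdStabilizerEquivGroup (Equiv.Perm α)ᵈᵐᵃ f)
  rw [Nat.card_prod, hstab, horbit, Nat.card_coe_set_eq, Set.ncard_coe_finset,
    Nat.card_congr DomMulAct.mk.symm, Nat.card_eq_fintype_card, Fintype.card_perm] at this
  exact this

lemma prod_factorial_smul_sum_fiberCard_eq [Fintype ι] [DecidableEq α] {M : Type*}
    [AddCommMonoid M] (φ : (α → ι) → M) (hφ : ∀ (g : α → ι) (σ : Equiv.Perm α), φ (g ∘ σ) = φ g)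
    (f : α → ι) :
    (∏ i, (fiberCard f i).factorial) • ∑ g with fiberCard g = fiberCard f, φ g
      = (Fintype.card α).factorial • φ f := by
  have hconst : ∀ g ∈ ({g | fiberCard g = fiberCard f} : Finset (α → ι)), φ g = φ f := by
    intro g hg
    obtain ⟨σ, rfl⟩ := exists_perm_comp_eq_of_fiberCard_eq (mem_filter.1 hg).2
    exact hφ f σ
  rw [sum_congr rfl hconst, sum_const, smul_smul, mul_comm, card_fiberCard_eq_mul_prod_factorial]

lemma sum_prod_factorial_add_fiberCard [Fintype ι] (q : ℕ) (c : ι → ℕ) :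
    ∑ K : Fin q → ι, ∏ i, (c i + fiberCard K i).factorial
      = (∏ i, (c i).factorial) * (∑ i, c i + Fintype.card ι).ascFactorial q := by
  induction q generalizing c with
  | zero => simp [fiberCard]
  | succ q ih =>
    have hsplit : ∑ K : Fin (q + 1) → ι, ∏ i, (c i + fiberCard K i).factorial
        = ∑ x, ∑ K : Fin q → ι,
            ∏ i, ((c + Pi.single x 1 : ι → ℕ) i + fiberCard K i).factorial := by
      rw [← (Fin.consEquiv fun _ => ι).sum_comp, Fintype.sum_prod_type]
      refine sum_congr rfl fun x _ => sum_congr rfl fun K _ => prod_congr rfl fun i _ => ?_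
      change (c i + fiberCard (Fin.cons x K : Fin (q + 1) → ι) i).factorial = _
      rw [fiberCard_cons, Pi.add_apply, Pi.add_apply, add_comm (fiberCard K i), add_assoc]
    have hprod (x : ι) : ∏ i, ((c + Pi.single x 1 : ι → ℕ) i).factorial
        = (c x + 1) * ∏ i, (c i).factorial := by
      rw [← mul_prod_erase _ _ (mem_univ x), ← mul_prod_erase _ _ (mem_univ x),
        prod_congr rfl fun i hi => by
          rw [Pi.add_apply, Pi.single_eq_of_ne (ne_of_mem_erase hi), add_zero],
        Pi.add_apply, Pi.single_eq_same, Nat.factorial_succ, mul_assoc]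
    have hsum (x : ι) : ∑ i, (c + Pi.single x 1 : ι → ℕ) i = ∑ i, c i + 1 := by
      simp [sum_add_distrib]
    simp_rw [hsplit, ih, hprod, hsum, mul_assoc, ← sum_mul, sum_add_distrib, sum_const, card_univ]
    rw [smul_eq_mul, mul_one, mul_left_comm, add_right_comm, Nat.succ_ascFactorial,
      Nat.ascFactorial_succ]

end fiberCard

lemma integral_prod_gaussMonomial {ι : Type*} [Fintype ι] {m : ℝ} (hm : 0 < m) (α β : ι → ℕ) :
    ∫ z : ι → ℂ, ∏ i, gaussMonomial m (α i) (β i) (z i)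
      = if α = β then (π : ℂ) ^ Fintype.card ι * (∏ i, ((α i).factorial : ℂ)) /
          (m : ℂ) ^ (∑ i, α i + Fintype.card ι) else 0 := by
  rw [volume_pi, integral_fintype_prod_eq_prod (fun i => gaussMonomial m (α i) (β i))]
  split_ifs with h
  · subst h
    simp_rw [integral_gaussMonomial_self hm, prod_div_distrib, prod_mul_distrib, prod_const,
      card_univ, prod_pow_eq_pow_sum, sum_add_distrib, sum_const, card_univ, smul_eq_mul, mul_one]
  · obtain ⟨i, hi⟩ := Function.ne_iff.1 h
    exact prod_eq_zero (mem_univ i) (integral_gaussMonomial_of_ne m hi)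

lemma prod_mul_prod_conj_mul_gaussian_eq_sum {α ι : Type*} [Fintype α] [Fintype ι]
    [DecidableEq ι] (m : ℝ) (q : ℕ) (I J : α → ι) (z : ι → ℂ) :
    (∏ a, z (I a)) * (∏ a, (starRingEnd ℂ) (z (J a))) *
        ((((∑ i, ‖z i‖ ^ 2) ^ q * rexp (-m * ∑ i, ‖z i‖ ^ 2) : ℝ)) : ℂ)
      = ∑ K : Fin q → ι, ∏ i, gaussMonomial m (fiberCard I i + fiberCard K i)
          (fiberCard J i + fiberCard K i) (z i) := by
  have hnorm : ((∑ i, ‖z i‖ ^ 2 : ℝ) : ℂ) = ∑ i, z i * (starRingEnd ℂ) (z i) := by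
    push_cast
    simp_rw [Complex.mul_conj']
  have hexp : ((rexp (-m * ∑ i, ‖z i‖ ^ 2) : ℝ) : ℂ)
      = ∏ i, ((rexp (-m * ‖z i‖ ^ 2) : ℝ) : ℂ) := by
    rw [mul_sum, exp_sum]
    push_cast
    rfl
  rw [Complex.ofReal_mul, Complex.ofReal_pow, hnorm, hexp, sum_pow', Fintype.piFinset_univ,
    sum_mul, mul_sum]
  refine sum_congr rfl fun K _ => ?_
  rw [prod_comp_eq_prod_pow_fiberCard z,
    prod_comp_eq_prod_pow_fiberCard fun i => (starRingEnd ℂ) (z i),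
    prod_comp_eq_prod_pow_fiberCard fun i => z i * (starRingEnd ℂ) (z i)]
  simp_rw [gaussMonomial, ← prod_mul_distrib]
  refine prod_congr rfl fun i _ => ?_
  ring

lemma integral_prod_mul_prod_conj_mul_gaussian {α ι : Type*} [Fintype α] [Fintype ι]
    [DecidableEq ι] {m : ℝ} (hm : 0 < m) (q : ℕ) (I J : α → ι) :
    ∫ z : ι → ℂ, (∏ a, z (I a)) * (∏ a, (starRingEnd ℂ) (z (J a))) *
        ((((∑ i, ‖z i‖ ^ 2) ^ q * rexp (-m * ∑ i, ‖z i‖ ^ 2) : ℝ)) : ℂ)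
      = if fiberCard J = fiberCard I then
          (π : ℂ) ^ Fintype.card ι * (∏ i, ((fiberCard I i).factorial : ℂ)) *
            ((Fintype.card α + Fintype.card ι).ascFactorial q : ℂ) /
              (m : ℂ) ^ (Fintype.card α + q + Fintype.card ι)
        else 0 := by
  simp_rw [prod_mul_prod_conj_mul_gaussian_eq_sum]
  rw [integral_finsetSum _ fun K _ => by
    rw [volume_pi]; exact Integrable.fintype_prod fun i => integrable_gaussMonomial hm _ _]
  have hcond (K : Fin q → ι) : ((fun i => fiberCard I i + fiberCard K i) =
      fun i => fiberCard J i + fiberCard K i) ↔ fiberCard J = fiberCard I := by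
    simp only [funext_iff, add_left_inj, eq_comm]
  have hdeg (K : Fin q → ι) : ∑ i, (fiberCard I i + fiberCard K i) + Fintype.card ι
      = Fintype.card α + q + Fintype.card ι := by
    rw [sum_add_distrib, sum_fiberCard, sum_fiberCard, Fintype.card_fin]
  simp_rw [integral_prod_gaussMonomial hm, hcond, hdeg]
  split_ifs
  · have h := sum_prod_factorial_add_fiberCard q (fiberCard I)
    rw [sum_fiberCard] at h
    have hℂ : ∑ K : Fin q → ι, ∏ i, ((fiberCard I i + fiberCard K i).factorial : ℂ)
        = (∏ i, ((fiberCard I i).factorial : ℂ)) *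
          ((Fintype.card α + Fintype.card ι).ascFactorial q : ℂ) := by
      exact_mod_cast h
    rw [← sum_div, ← mul_sum, hℂ, mul_assoc]
  · exact sum_const_zero

/-- Combinatorial Gaussian integral lemma for symmetric functions
`A : {1,…,n}^p × {1,…,n}^p → ℂ`. -/
theorem symmetric_gaussian_sum (n p q : ℕ) (hn : 0 < n)
    (A : (Fin p → Fin n) → (Fin p → Fin n) → ℂ)
    (hsym : ∀ (σ η : Equiv.Perm (Fin p)) (I J : Fin p → Fin n),
      A (I ∘ σ) (J ∘ η) = A I J)
    (m : ℝ) (hm : 0 < m) :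
    ∑ I : Fin p → Fin n, ∑ J : Fin p → Fin n,
      A I J * (((π : ℂ)⁻¹) ^ n *
        ∫ z : Fin n → ℂ,
          (∏ a, z (I a)) * (∏ a, (starRingEnd ℂ) (z (J a))) *
            ((((∑ i, ‖z i‖ ^ 2) ^ q * Real.exp (-m * ∑ i, ‖z i‖ ^ 2) : ℝ)) : ℂ))
    = (∑ I : Fin p → Fin n, A I I) *
        (Nat.factorial p * Nat.factorial (n + p + q - 1)) /
          (Nat.factorial (p + n - 1) * (m : ℂ) ^ (n + p + q)) := by
  have hπ : (π : ℂ) ^ n ≠ 0 := pow_ne_zero n (Complex.ofReal_ne_zero.2 pi_ne_zero)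
  have hm' : (m : ℂ) ≠ 0 := Complex.ofReal_ne_zero.2 hm.ne'
  have horbit (I : Fin p → Fin n) : (∏ i, ((fiberCard I i).factorial : ℂ)) *
      ∑ J with fiberCard J = fiberCard I, A I J = p.factorial * A I I := by
    simpa only [nsmul_eq_mul, Nat.cast_prod, Fintype.card_fin] using
      prod_factorial_smul_sum_fiberCard_eq (A I) (fun J σ => hsym 1 σ I J) I
  have hfac : ((p + n - 1).factorial : ℂ) * (p + n).ascFactorial q
      = (n + p + q - 1).factorial := by
    have h := Nat.factorial_mul_ascFactorial (p + n - 1) q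
    rw [Nat.sub_add_cancel (by omega), show p + n - 1 + q = n + p + q - 1 by omega] at h
    exact_mod_cast h
  simp_rw [integral_prod_mul_prod_conj_mul_gaussian hm, Fintype.card_fin, mul_ite, mul_zero,
    ← sum_filter, sum_mul, sum_div]
  refine sum_congr rfl fun I _ => ?_
  rw [← sum_mul, ← hfac, show p + q + n = n + p + q by ring, inv_pow]
  have hfac₀ : ((p + n - 1).factorial : ℂ) ≠ 0 := Nat.cast_ne_zero.2 (Nat.factorial_ne_zero _)
  field_simp
  linear_combination ((p + n).ascFactorial q : ℂ) * horbit I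
end
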